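/- arXiv:2506.06044 — 4 statements merged into one kernel-verified Lean document; each statement's English description precedes it below -/
import Mathlib

section
/- Let G be a simple graph on a vertex type V, let v ∈ V, let N₁ and N₂ be disjoint sets with N₁ ∪ N₂ = N_G(v), and let G' be the exclusive-split graph of G at v determined by (N₁, N₂). If a vertex u ∈ V with u ≠ v is a claw center in G, then inl u is a claw center in G'. In particular, splitting a vertex other than the center of an induced claw cannot destroy that claw: G' still contains an induced claw centered at inl u. -/
/-- A vertex `u` of `H` is a claw center if it has three distinct pairwise
non-adjacent neighbors. -/
def IsClawCenter {W : Type*} (H : SimpleGraph W) (u : W) : Prop :=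
  ∃ a b c : W, a ≠ b ∧ a ≠ c ∧ b ≠ c ∧
    H.Adj u a ∧ H.Adj u b ∧ H.Adj u c ∧
    ¬ H.Adj a b ∧ ¬ H.Adj a c ∧ ¬ H.Adj b c

/-- The exclusive-split graph of `G` at `v` determined by `(N₁, N₂)`: the graph
on `V ⊕ Unit` where `Sum.inl v` plays the role of the copy `v₁` (adjacent to
`N₁`) and `Sum.inr ()` the role of the copy `v₂` (adjacent to `N₂`), and all
other adjacencies among vertices different from `v` are as in `G`. -/
def splitGraph {V : Type*} (G : SimpleGraph V) (v : V) (N₁ N₂ : Set V) :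
    SimpleGraph (V ⊕ Unit) where
  Adj x y :=
    match x, y with
    | Sum.inl u, Sum.inl w =>
        (u ≠ v ∧ w ≠ v ∧ G.Adj u w) ∨ (u = v ∧ w ≠ v ∧ w ∈ N₁) ∨
          (u ≠ v ∧ w = v ∧ u ∈ N₁)
    | Sum.inl u, Sum.inr _ => u ≠ v ∧ u ∈ N₂
    | Sum.inr _, Sum.inl u => u ≠ v ∧ u ∈ N₂
    | Sum.inr _, Sum.inr _ => False
  symm := by
    constructor
    rintro (u | u) (w | w) h
    · rcases h with ⟨h1, h2, h3⟩ | ⟨h1, h2, h3⟩ | ⟨h1, h2, h3⟩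
      · exact Or.inl ⟨h2, h1, h3.symm⟩
      · exact Or.inr (Or.inr ⟨h2, h1, h3⟩)
      · exact Or.inr (Or.inl ⟨h2, h1, h3⟩)
    · exact h
    · exact h
    · exact h.elim
  loopless := by
    constructor
    rintro (u | u) h
    · rcases h with ⟨h1, h2, h3⟩ | ⟨h1, h2, h3⟩ | ⟨h1, h2, h3⟩
      · exact G.irrefl h3
      · exact h2 h1
      · exact h1 h2
    · exact h

/-!
Sending `inl x ↦ x` and `inr () ↦ v` is a homomorphism from the split graph onto `G`, so it
reflects non-adjacency. A claw `a, b, c` at `u ≠ v` therefore lifts to the split graph as soon as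
each leaf has a preimage adjacent to `inl u`: a leaf `x ≠ v` lifts to `inl x`, and if `v` is a leaf
then `u` lies in `N₁` or `N₂`, and `v` lifts to the copy `inl v` or `inr ()` on that side.
-/

theorem IsClawCenter.of_leftInverse_hom {V W : Type*} {G : SimpleGraph V} {H : SimpleGraph W}
    (π : H →g G) {φ : V → W} (hφ : Function.LeftInverse π φ) {u : V} {u' : W}
    (hadj : ∀ x, G.Adj u x → H.Adj u' (φ x)) (hu : IsClawCenter G u) : IsClawCenter H u' := by
  obtain ⟨a, b, c, hab, hac, hbc, hua, hub, huc, nab, nac, nbc⟩ := hu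
  have reflect {x y : V} (h : ¬ G.Adj x y) : ¬ H.Adj (φ x) (φ y) := fun h' ↦
    h (by simpa only [hφ _] using π.map_adj h')
  exact ⟨φ a, φ b, φ c, hφ.injective.ne hab, hφ.injective.ne hac, hφ.injective.ne hbc,
    hadj a hua, hadj b hub, hadj c huc, reflect nab, reflect nac, reflect nbc⟩

section splitGraph

variable {V : Type*} {G : SimpleGraph V} {v : V} {N₁ N₂ : Set V}

def splitGraphProj (h₁ : N₁ ⊆ G.neighborSet v) (h₂ : N₂ ⊆ G.neighborSet v) :
    splitGraph G v N₁ N₂ →g G where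
  toFun := Sum.elim id fun _ ↦ v
  map_rel' := by
    rintro (x | _) (y | _) h
    · rcases h with ⟨-, -, hxy⟩ | ⟨rfl, -, hy⟩ | ⟨-, rfl, hx⟩
      exacts [hxy, h₁ hy, (h₁ hx).symm]
    · exact (h₂ h.2).symm
    · exact h₂ h.2
    · exact h.elim

theorem exists_splitGraph_lift (hsub : G.neighborSet v ⊆ N₁ ∪ N₂) {u : V} (huv : u ≠ v) :
    ∃ φ : V → V ⊕ Unit, Function.LeftInverse (Sum.elim id fun _ ↦ v) φ ∧
      ∀ x, G.Adj u x → (splitGraph G v N₁ N₂).Adj (Sum.inl u) (φ x) := by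
  classical
  have adj_inl {x : V} (hxv : x ≠ v) (h : G.Adj u x) :
      (splitGraph G v N₁ N₂).Adj (Sum.inl u) (Sum.inl x) := Or.inl ⟨huv, hxv, h⟩
  by_cases hu₁ : u ∈ N₁
  · refine ⟨Sum.inl, fun _ ↦ rfl, fun x h ↦ ?_⟩
    obtain rfl | hxv := eq_or_ne x v
    · exact Or.inr (Or.inr ⟨huv, rfl, hu₁⟩)
    · exact adj_inl hxv h
  · refine ⟨Function.update Sum.inl v (Sum.inr ()), fun x ↦ ?_, fun x h ↦ ?_⟩
    all_goals obtain rfl | hxv := eq_or_ne x v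
    · rw [Function.update_self]; rfl
    · rw [Function.update_of_ne hxv]; rfl
    · rw [Function.update_self]
      exact ⟨huv, (hsub h.symm).resolve_left hu₁⟩
    · rw [Function.update_of_ne hxv]
      exact adj_inl hxv h

end splitGraph

theorem split_preserves_other_claw_centers_general {V : Type*} (G : SimpleGraph V)
    (v : V) (N₁ N₂ : Set V)
    (hunion : N₁ ∪ N₂ = G.neighborSet v)
    (u : V) (huv : u ≠ v) (hu : IsClawCenter G u) :
    IsClawCenter (splitGraph G v N₁ N₂) (Sum.inl u) := by
  obtain ⟨φ, hφ, hadj⟩ := exists_splitGraph_lift hunion.ge huv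
  exact hu.of_leftInverse_hom
    (splitGraphProj (Set.subset_union_left.trans hunion.le)
      (Set.subset_union_right.trans hunion.le)) hφ hadj

/-- Splitting a vertex `v` cannot destroy a claw centered at another vertex
`u ≠ v`: if `u` is a claw center in `G`, then `Sum.inl u` is a claw center in
the exclusive-split graph of `G` at `v`. -/
theorem split_preserves_other_claw_centers {V : Type*} (G : SimpleGraph V)
    (v : V) (N₁ N₂ : Set V)
    (hdisj : Disjoint N₁ N₂) (hunion : N₁ ∪ N₂ = G.neighborSet v)
    (u : V) (huv : u ≠ v) (hu : IsClawCenter G u) :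
    IsClawCenter (splitGraph G v N₁ N₂) (Sum.inl u) :=
  split_preserves_other_claw_centers_general G v N₁ N₂ hunion u huv hu
end

section
/- Let G be a simple graph and let v be a vertex of degree exactly 4 such that the induced subgraph G[N(v)] on the four neighbors of v is disconnected (has at least two connected components). Then there exist nonempty disjoint sets N₁, N₂ with N₁ ∪ N₂ = N(v) such that: (1) the partition respects the connected components of G[N(v)] (any two neighbors of v in the same connected component of G[N(v)] lie in the same part), and (2) neither N₁ nor N₂ contains three distinct pairwise non-adjacent vertices of G. -/
/-!
The components of `G[N(v)]` partition four vertices into at least two classes. If some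
component `C` contains an edge, split `N(v)` into `C` and the rest: `C` has at most three
vertices, one edge among them spoils every independent triple, and the rest has at most two
vertices. Otherwise every component is a single vertex, and any split into two pairs works.
-/

namespace SimpleGraph

variable {V : Type*} (G : SimpleGraph V)

def IndepTripleFree (S : Set V) : Prop :=
  ¬ ∃ a b c : V, a ∈ S ∧ b ∈ S ∧ c ∈ S ∧ a ≠ b ∧ a ≠ c ∧ b ≠ c ∧
    ¬ G.Adj a b ∧ ¬ G.Adj a c ∧ ¬ G.Adj b c

def IsComponentSplit (s N₁ N₂ : Set V) : Prop :=
  N₁.Nonempty ∧ N₂.Nonempty ∧ Disjoint N₁ N₂ ∧ N₁ ∪ N₂ = s ∧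
    (∀ a b : s, (G.induce s).Reachable a b → ((a : V) ∈ N₁ ↔ (b : V) ∈ N₁)) ∧
    G.IndepTripleFree N₁ ∧ G.IndepTripleFree N₂

variable {G} {S s : Set V}

theorem indepTripleFree_of_ncard_le_two (hS : S.Finite) (h : S.ncard ≤ 2) :
    G.IndepTripleFree S := by
  rintro ⟨a, b, c, ha, hb, hc, hab, hac, hbc, -⟩
  have := (Set.two_lt_ncard hS).mpr ⟨a, ha, b, hb, c, hc, hab, hac, hbc⟩
  omega

theorem indepTripleFree_of_adj_of_ncard_le_three (hS : S.Finite) (h : S.ncard ≤ 3)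
    {x y : V} (hx : x ∈ S) (hy : y ∈ S) (hxy : G.Adj x y) : G.IndepTripleFree S := by
  rintro ⟨a, b, c, ha, hb, hc, hab, hac, hbc, nab, nac, nbc⟩
  have hsub : ({a, b, c} : Set V) ⊆ S := by
    rintro w (rfl | rfl | rfl) <;> assumption
  have htriple : S = {a, b, c} :=
    (Set.eq_of_subset_of_ncard_le hsub
      (by rw [Set.ncard_eq_three.mpr ⟨a, b, c, hab, hac, hbc, rfl⟩]; exact h) hS).symm
  rw [htriple] at hx hy
  rcases hx with rfl | rfl | rfl <;> rcases hy with rfl | rfl | rfl <;>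
    simp_all [G.adj_comm]

theorem mem_image_supp_connectedComponentMk_iff {H : SimpleGraph s} {u w : s} :
    (w : V) ∈ Subtype.val '' (H.connectedComponentMk u).supp ↔ H.Reachable w u := by
  rw [Subtype.val_injective.mem_set_image, ConnectedComponent.mem_supp_iff,
    ConnectedComponent.eq]

theorem exists_isComponentSplit_of_adj (hs : s.ncard = 4) (hdisc : ¬ (G.induce s).Connected)
    {a b : V} (ha : a ∈ s) (hb : b ∈ s) (hab : G.Adj a b) :
    ∃ N₁ N₂, G.IsComponentSplit s N₁ N₂ := by
  have hfin : s.Finite := Set.finite_of_ncard_ne_zero (by omega)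
  set C := Subtype.val '' ((G.induce s).connectedComponentMk ⟨a, ha⟩).supp
  have hCs : C ⊆ s := Subtype.coe_image_subset _ _
  have haC : a ∈ C := mem_image_supp_connectedComponentMk_iff.mpr (Reachable.refl _)
  have hbC : b ∈ C := mem_image_supp_connectedComponentMk_iff.mpr
    (show (G.induce s).Adj ⟨b, hb⟩ ⟨a, ha⟩ from hab.symm).reachable
  have hrest : (s \ C).Nonempty := by
    rw [connected_iff_exists_forall_reachable] at hdisc
    push Not at hdisc
    obtain ⟨w, hw⟩ := hdisc ⟨a, ha⟩
    exact ⟨w, w.2, fun hwC => hw (mem_image_supp_connectedComponentMk_iff.mp hwC).symm⟩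
  have hcard := Set.ncard_sdiff_add_ncard_of_subset hCs hfin
  have hC2 : 1 < C.ncard := (Set.one_lt_ncard (hfin.subset hCs)).mpr ⟨a, haC, b, hbC, hab.ne⟩
  have hrest1 : 0 < (s \ C).ncard := (Set.ncard_pos hfin.sdiff).mpr hrest
  refine ⟨C, s \ C, ⟨a, haC⟩, hrest, Set.disjoint_sdiff_right, Set.union_sdiff_cancel hCs,
    fun p q hpq => ?_,
    indepTripleFree_of_adj_of_ncard_le_three (hfin.subset hCs) (by omega) haC hbC hab,
    indepTripleFree_of_ncard_le_two hfin.sdiff (by omega)⟩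
  simp only [C, mem_image_supp_connectedComponentMk_iff]
  exact ⟨hpq.symm.trans, hpq.trans⟩

theorem exists_isComponentSplit_of_forall_not_adj (hs : s.ncard = 4)
    (hadj : ∀ a ∈ s, ∀ b ∈ s, ¬ G.Adj a b) : ∃ N₁ N₂, G.IsComponentSplit s N₁ N₂ := by
  have hfin : s.Finite := Set.finite_of_ncard_ne_zero (by omega)
  obtain ⟨x, hx, y, hy, hxy⟩ := (Set.one_lt_ncard hfin).mp (by omega)
  have hpair : ({x, y} : Set V) ⊆ s := by
    rintro w (rfl | rfl) <;> assumption
  have hcard := Set.ncard_sdiff_add_ncard_of_subset hpair hfin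
  rw [Set.ncard_pair hxy] at hcard
  have hbot : G.induce s = ⊥ :=
    eq_bot_iff_forall_not_adj.mpr fun p q => hadj p p.2 q q.2
  refine ⟨{x, y}, s \ {x, y}, ⟨x, Or.inl rfl⟩, Set.nonempty_of_ncard_ne_zero (by omega),
    Set.disjoint_sdiff_right, Set.union_sdiff_cancel hpair, fun p q hpq => ?_,
    indepTripleFree_of_ncard_le_two (hfin.subset hpair) (by rw [Set.ncard_pair hxy]),
    indepTripleFree_of_ncard_le_two hfin.sdiff (by omega)⟩
  rw [hbot, reachable_bot] at hpq
  rw [hpq]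

theorem exists_isComponentSplit_of_ncard_eq_four (hs : s.ncard = 4)
    (hdisc : ¬ (G.induce s).Connected) : ∃ N₁ N₂, G.IsComponentSplit s N₁ N₂ := by
  by_cases hadj : ∃ a ∈ s, ∃ b ∈ s, G.Adj a b
  · obtain ⟨a, ha, b, hb, hab⟩ := hadj
    exact exists_isComponentSplit_of_adj hs hdisc ha hb hab
  · push Not at hadj
    exact exists_isComponentSplit_of_forall_not_adj hs hadj

end SimpleGraph

/-- If `v` has degree exactly 4 and the induced subgraph `G[N(v)]` is
disconnected, then there is a partition of `N(v)` into two nonempty parts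
`N₁, N₂` that respects the connected components of `G[N(v)]` and such that
neither part contains three distinct pairwise non-adjacent vertices of `G`. -/
theorem degree_four_good_split_exists {V : Type*} (G : SimpleGraph V) (v : V)
    (hdeg : (G.neighborSet v).ncard = 4)
    (hdisc : ¬ (G.induce (G.neighborSet v)).Connected) :
    ∃ N₁ N₂ : Set V, N₁.Nonempty ∧ N₂.Nonempty ∧ Disjoint N₁ N₂ ∧
      N₁ ∪ N₂ = G.neighborSet v ∧
      (∀ a b : ↥(G.neighborSet v),
        (G.induce (G.neighborSet v)).Reachable a b → ((a : V) ∈ N₁ ↔ (b : V) ∈ N₁)) ∧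
      ¬ (∃ a b c : V, a ∈ N₁ ∧ b ∈ N₁ ∧ c ∈ N₁ ∧ a ≠ b ∧ a ≠ c ∧ b ≠ c ∧
          ¬ G.Adj a b ∧ ¬ G.Adj a c ∧ ¬ G.Adj b c) ∧
      ¬ (∃ a b c : V, a ∈ N₂ ∧ b ∈ N₂ ∧ c ∈ N₂ ∧ a ≠ b ∧ a ≠ c ∧ b ≠ c ∧
          ¬ G.Adj a b ∧ ¬ G.Adj a c ∧ ¬ G.Adj b c) :=
  SimpleGraph.exists_isComponentSplit_of_ncard_eq_four hdeg hdisc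
end

section
/- Let G be a finite simple graph on a vertex set V, let k be a natural number, and let C ⊆ V be a set of vertices (the claw centers) satisfying: (1) |C| ≤ k; (2) every vertex of V lies in the closed neighborhood N[c] of some c ∈ C; and (3) for every c ∈ C, the neighborhood N(c) can be covered by at most 2(k+1) cliques of G, each of which contains at most k vertices not belonging to C. Then |V| ≤ 2k³ + 2k² + k. -/
/-! A vertex outside `C` is a neighbour of some `c ∈ C`, so it lies in one of the at most
`2(k+1)` cliques covering `N(c)`, each of which has at most `k` vertices outside `C`.
Hence `|V| ≤ |C| + |C| · 2(k+1) · k ≤ k + 2(k+1)k²`. -/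

open Finset

theorem Set.ncard_diff_le_of_subset_iUnion {α ι : Type*} [Finite α] [Fintype ι]
    {s t : Set α} {S : ι → Set α} {k : ℕ} (hs : s ⊆ ⋃ i, S i)
    (hS : ∀ i, (S i \ t).ncard ≤ k) : (s \ t).ncard ≤ Fintype.card ι * k :=
  calc (s \ t).ncard ≤ (⋃ i, S i \ t).ncard :=
        Set.ncard_le_ncard (by rw [← Set.iUnion_sdiff]; exact Set.sdiff_subset_sdiff_left hs)
    _ ≤ ∑ i, (S i \ t).ncard := Set.ncard_iUnion_le_of_fintype _
    _ ≤ ∑ _i : ι, k := sum_le_sum fun i _ => hS i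
    _ = Fintype.card ι * k := by simp

theorem SimpleGraph.card_le_card_add_sum_ncard_neighborSet_diff {V : Type*} [Fintype V]
    (G : SimpleGraph V) (C : Finset V) (hdom : ∀ u : V, ∃ c ∈ C, u = c ∨ G.Adj c u) :
    Fintype.card V ≤ #C + ∑ c ∈ C, (G.neighborSet c \ C).ncard := by
  have hcover : Set.univ ⊆ (C : Set V) ∪ ⋃ c ∈ C, (G.neighborSet c \ C) := by
    intro u _
    by_cases huC : u ∈ C
    · exact Or.inl huC
    obtain ⟨c, hc, rfl | hadj⟩ := hdom u
    · exact absurd hc huC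
    · exact Or.inr (Set.mem_biUnion hc ⟨hadj, huC⟩)
  calc Fintype.card V = (Set.univ : Set V).ncard := by rw [Set.ncard_univ, Nat.card_eq_fintype_card]
    _ ≤ ((C : Set V) ∪ ⋃ c ∈ C, (G.neighborSet c \ C)).ncard := Set.ncard_le_ncard hcover
    _ ≤ (C : Set V).ncard + (⋃ c ∈ C, (G.neighborSet c \ C)).ncard := Set.ncard_union_le _ _
    _ ≤ #C + ∑ c ∈ C, (G.neighborSet c \ C).ncard := by
        rw [Set.ncard_coe_finset]
        exact Nat.add_le_add_left (C.set_ncard_biUnion_le _) _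

/-- Kernel size bound for Claw-Free Vertex Splitting: if `C` is a set of at
most `k` vertices (the claw centers) such that every vertex lies in the closed
neighborhood of some member of `C`, and for every `c ∈ C` the neighborhood
`N(c)` is covered by at most `2(k+1)` cliques each containing at most `k`
vertices outside `C`, then the graph has at most `2k³ + 2k² + k` vertices. -/
theorem cfvs_kernel_size_bound {V : Type*} [Fintype V] (G : SimpleGraph V)
    (k : ℕ) (C : Finset V)
    (h1 : C.card ≤ k)
    (h2 : ∀ u : V, ∃ c ∈ C, u = c ∨ G.Adj c u)
    (h3 : ∀ c ∈ C, ∃ (m : ℕ) (S : Fin m → Set V), m ≤ 2 * (k + 1) ∧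
      (∀ i, G.IsClique (S i)) ∧ G.neighborSet c ⊆ ⋃ i, S i ∧
      ∀ i, (S i \ (C : Set V)).ncard ≤ k) :
    Fintype.card V ≤ 2 * k ^ 3 + 2 * k ^ 2 + k := by
  have hN : ∀ c ∈ C, (G.neighborSet c \ C).ncard ≤ 2 * (k + 1) * k := by
    intro c hc
    obtain ⟨m, S, hm, -, hcov, hS⟩ := h3 c hc
    calc (G.neighborSet c \ C).ncard ≤ Fintype.card (Fin m) * k :=
          Set.ncard_diff_le_of_subset_iUnion hcov hS
      _ ≤ 2 * (k + 1) * k := by rw [Fintype.card_fin]; exact Nat.mul_le_mul_right k hm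
  calc Fintype.card V ≤ #C + ∑ c ∈ C, (G.neighborSet c \ C).ncard :=
        G.card_le_card_add_sum_ncard_neighborSet_diff C h2
    _ ≤ k + #C * (2 * (k + 1) * k) := add_le_add h1 (sum_le_card_nsmul _ _ _ hN)
    _ ≤ k + k * (2 * (k + 1) * k) := by gcongr
    _ = 2 * k ^ 3 + 2 * k ^ 2 + k := by ring
end

section
/- Let c ≥ 1, let G be a finite simple graph on a vertex set V, let k be a natural number, and let C ⊆ V be a set of vertices satisfying: (1) |C| ≤ k; (2) every vertex of V lies in the closed neighborhood N[w] of some w ∈ C; and (3) for every w ∈ C, the neighborhood N(w) can be covered by at most (c−1)(k+1) cliques of G, each of which contains at most k vertices not belonging to C. Then |V| ≤ (c−1)k³ + (c−1)k² + k. -/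
/-!
Every vertex outside `C` is a neighbour of some `w ∈ C`, so
`|V| ≤ |C| + ∑_{w ∈ C} |N(w) \ C|`.
Each `N(w) \ C` is covered by at most `(c-1)(k+1)` sets `S \ C`,
each of size at most `k`, so `|N(w) \ C| ≤ (c-1)(k+1)k`; summing over the `≤ k` vertices of `C`
gives `k + k · (c-1)(k+1)k`.
-/

open Finset

namespace Set

lemma ncard_sdiff_le_of_subset_iUnion {α ι : Type*} [Finite α] [Fintype ι] {s t : Set α}
    {S : ι → Set α} {k : ℕ} (hs : s ⊆ ⋃ i, S i) (hS : ∀ i, (S i \ t).ncard ≤ k) :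
    (s \ t).ncard ≤ Fintype.card ι * k :=
  calc (s \ t).ncard
      ≤ (⋃ i, (S i \ t)).ncard :=
        ncard_le_ncard (by rw [← iUnion_sdiff]; exact sdiff_subset_sdiff_left hs)
    _ ≤ ∑ i, (S i \ t).ncard := ncard_iUnion_le_of_fintype _
    _ ≤ ∑ _i : ι, k := sum_le_sum fun i _ ↦ hS i
    _ = Fintype.card ι * k := by rw [sum_const, card_univ, smul_eq_mul]

end Set

namespace SimpleGraph

lemma card_le_card_add_sum_ncard_neighborSet_sdiff {V : Type*} [Finite V] (G : SimpleGraph V)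
    (C : Finset V) (hC : ∀ u : V, ∃ w ∈ C, u = w ∨ G.Adj w u) :
    Nat.card V ≤ #C + ∑ w ∈ C, (G.neighborSet w \ C).ncard := by
  have hcover : (Set.univ : Set V) ⊆ C ∪ ⋃ w ∈ C, (G.neighborSet w \ C) := by
    intro u _
    by_cases huC : u ∈ C
    · exact Or.inl huC
    obtain ⟨w, hw, rfl | hadj⟩ := hC u
    · exact absurd hw huC
    · exact Or.inr (Set.mem_biUnion hw ⟨hadj, huC⟩)
  calc Nat.card V
      = (Set.univ : Set V).ncard := (Set.ncard_univ V).symm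
    _ ≤ (C ∪ ⋃ w ∈ C, (G.neighborSet w \ C) : Set V).ncard := Set.ncard_le_ncard hcover
    _ ≤ (C : Set V).ncard + (⋃ w ∈ C, (G.neighborSet w \ C)).ncard := Set.ncard_union_le _ _
    _ ≤ #C + ∑ w ∈ C, (G.neighborSet w \ C).ncard := by
        rw [Set.ncard_coe_finset]
        exact Nat.add_le_add_left (C.set_ncard_biUnion_le _) _

end SimpleGraph

theorem k1c_kernel_size_bound_general {V : Type*} [Fintype V] (G : SimpleGraph V)
    (c : ℕ) (k : ℕ) (C : Finset V)
    (h1 : C.card ≤ k)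
    (h2 : ∀ u : V, ∃ w ∈ C, u = w ∨ G.Adj w u)
    (h3 : ∀ w ∈ C, ∃ (m : ℕ) (S : Fin m → Set V), m ≤ (c - 1) * (k + 1) ∧
      (∀ i, G.IsClique (S i)) ∧ G.neighborSet w ⊆ ⋃ i, S i ∧
      ∀ i, (S i \ (C : Set V)).ncard ≤ k) :
    Fintype.card V ≤ (c - 1) * k ^ 3 + (c - 1) * k ^ 2 + k := by
  have hN : ∀ w ∈ C, (G.neighborSet w \ C).ncard ≤ (c - 1) * (k + 1) * k := by
    intro w hw
    obtain ⟨m, S, hm, -, hcov, hS⟩ := h3 w hw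
    calc (G.neighborSet w \ C).ncard
        ≤ Fintype.card (Fin m) * k := Set.ncard_sdiff_le_of_subset_iUnion hcov hS
      _ ≤ (c - 1) * (k + 1) * k := by rw [Fintype.card_fin]; exact Nat.mul_le_mul_right k hm
  calc Fintype.card V
      = Nat.card V := Nat.card_eq_fintype_card.symm
    _ ≤ #C + ∑ w ∈ C, (G.neighborSet w \ C).ncard :=
        G.card_le_card_add_sum_ncard_neighborSet_sdiff C h2
    _ ≤ k + #C * ((c - 1) * (k + 1) * k) :=
        Nat.add_le_add h1 (by simpa using sum_le_sum hN)
    _ ≤ k + k * ((c - 1) * (k + 1) * k) := by gcongr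
    _ = (c - 1) * k ^ 3 + (c - 1) * k ^ 2 + k := by ring

/-- Kernel size bound for `K_{1,c}`-Free Vertex Splitting: if `C` is a set of
at most `k` vertices such that every vertex lies in the closed neighborhood of
some member of `C`, and for every `w ∈ C` the neighborhood `N(w)` is covered by
at most `(c−1)(k+1)` cliques each containing at most `k` vertices outside `C`,
then the graph has at most `(c−1)k³ + (c−1)k² + k` vertices. -/
theorem k1c_kernel_size_bound {V : Type*} [Fintype V] (G : SimpleGraph V)
    (c : ℕ) (hc : 1 ≤ c) (k : ℕ) (C : Finset V)
    (h1 : C.card ≤ k)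
    (h2 : ∀ u : V, ∃ w ∈ C, u = w ∨ G.Adj w u)
    (h3 : ∀ w ∈ C, ∃ (m : ℕ) (S : Fin m → Set V), m ≤ (c - 1) * (k + 1) ∧
      (∀ i, G.IsClique (S i)) ∧ G.neighborSet w ⊆ ⋃ i, S i ∧
      ∀ i, (S i \ (C : Set V)).ncard ≤ k) :
    Fintype.card V ≤ (c - 1) * k ^ 3 + (c - 1) * k ^ 2 + k :=
  k1c_kernel_size_bound_general G c k C h1 h2 h3
end
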